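/- arXiv:2009.05182 — 2 statements merged into one kernel-verified Lean document; each statement's English description precedes it below -/
import Mathlib

section
/- Let $u \in L^2([0,T];\mathbb{R}^m)$, let $r \in (0,T)$ be a Lebesgue point of $u$, and let $(u_k)_{k\in\mathbb{N}} \subseteq L^2([0,T];\mathbb{R}^m)$ converge to $u$ strongly in $L^2$. Suppose the set of discontinuities of each $u_k$ has Lebesgue measure zero and $r$ avoids all of them. Then there exists a sequence $(r_k)_{k\in\mathbb{N}} \subseteq (0,r)$ such that each $r_k$ is a Lebesgue point of $u_k$, $r_k \to r$, and $u_k(r_k) \to u(r)$ as $k \to \infty$. -/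
open Set Filter Topology MeasureTheory

/-- `t` is a Lebesgue point of `u`: `(1/η) ∫_t^{t+η} ‖u(s) - u(t)‖ ds → 0` as `η → 0`. -/
def IsLebesguePoint {m : ℕ} (u : ℝ → EuclideanSpace ℝ (Fin m)) (t : ℝ) : Prop :=
  Tendsto (fun η : ℝ => η⁻¹ * ∫ s in t..(t + η), ‖u s - u t‖) (𝓝[≠] 0) (𝓝 0)

/-! Cauchy–Schwarz turns the `L²` convergence into `b_k := ‖u_k - u‖_{L¹(0,T)} → 0`. Choose window
lengths `η_k → 0` with `b_k / η_k → 0`. On `(r - η_k, r)` the mean of `‖u_k - u(r)‖` is at most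
`b_k / η_k` plus the mean of `‖u - u(r)‖`, and the latter tends to `0` because `r` is a Lebesgue
point of `u`. Take for `r_k` a point of the window where `‖u_k - u(r)‖` is at most its mean and
`u_k` is continuous (a full-measure condition); continuity points are Lebesgue points. -/

theorem ContinuousAt.isLebesguePoint {m : ℕ} {u : ℝ → EuclideanSpace ℝ (Fin m)} {t : ℝ}
    (h : ContinuousAt u t) : IsLebesguePoint u t := by
  rw [IsLebesguePoint, Metric.tendsto_nhdsWithin_nhds]
  intro ε hε
  obtain ⟨δ, hδ, hball⟩ := Metric.continuousAt_iff.mp h (ε / 2) (half_pos hε)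
  refine ⟨δ, hδ, fun {η} hη0 hη => ?_⟩
  rw [Real.dist_0_eq_abs] at hη
  have hbound : ∀ s ∈ uIoc t (t + η), ‖‖u s - u t‖‖ ≤ ε / 2 := fun s hs => by
    have hst := abs_sub_left_of_mem_uIcc (uIoc_subset_uIcc hs)
    rw [add_sub_cancel_left] at hst
    rw [norm_norm, ← dist_eq_norm]
    exact (hball (by rw [Real.dist_eq]; linarith)).le
  -- No integrability is needed: a non-integrable integrand has integral `0`.
  calc dist (η⁻¹ * ∫ s in t..(t + η), ‖u s - u t‖) 0
      = |η|⁻¹ * ‖∫ s in t..(t + η), ‖u s - u t‖‖ := by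
        rw [dist_zero_right, norm_mul, norm_inv, Real.norm_eq_abs]
    _ ≤ |η|⁻¹ * (ε / 2 * |t + η - t|) := by
        gcongr; exact intervalIntegral.norm_integral_le_of_norm_le_const hbound
    _ = ε / 2 := by
        rw [add_sub_cancel_left, mul_left_comm, inv_mul_cancel₀ (abs_ne_zero.mpr hη0), mul_one]
    _ < ε := half_lt_self hε

theorem IsLebesguePoint.tendsto_left_average {m : ℕ} {u : ℝ → EuclideanSpace ℝ (Fin m)} {t : ℝ}
    (h : IsLebesguePoint u t) :
    Tendsto (fun η : ℝ => η⁻¹ * ∫ s in Ioo (t - η) t, ‖u s - u t‖) (𝓝[>] 0) (𝓝 0) := by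
  have hneg : Tendsto (fun η : ℝ => -η) (𝓝[>] 0) (𝓝[≠] 0) := by
    simpa using (tendsto_neg_nhdsGT_neg (a := (0 : ℝ))).mono_right (nhdsLT_le_nhdsNE 0)
  refine (h.comp hneg).congr' ?_
  filter_upwards [self_mem_nhdsWithin] with η (hη : 0 < η)
  rw [Function.comp_apply, ← sub_eq_add_neg, intervalIntegral.integral_symm,
    intervalIntegral.integral_of_le (by linarith), integral_Ioc_eq_integral_Ioo, inv_neg,
    neg_mul_neg]

theorem integral_norm_le_sqrt_measureReal_univ_mul {α E : Type*} [MeasurableSpace α]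
    [NormedAddCommGroup E] {μ : Measure α} [IsFiniteMeasure μ] {g : α → E} (hg : MemLp g 2 μ) :
    ∫ a, ‖g a‖ ∂μ ≤ √(μ.real univ) * √(∫ a, ‖g a‖ ^ 2 ∂μ) := by
  have hölder := integral_mul_le_Lp_mul_Lq_of_nonneg (μ := μ) Real.HolderConjugate.two_two
    (f := fun _ => (1 : ℝ)) (g := fun a => ‖g a‖) (ae_of_all _ fun _ => zero_le_one)
    (ae_of_all _ fun _ => norm_nonneg _) (by simpa using memLp_const (μ := μ) (1 : ℝ))
    (by simpa using hg.norm)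
  simpa only [one_mul, Real.one_rpow, integral_const, smul_eq_mul, mul_one, Real.rpow_two,
    one_pow, ← Real.sqrt_eq_rpow] using hölder

theorem tendsto_integral_norm_of_tendsto_integral_norm_sq {α E ι : Type*} [MeasurableSpace α]
    [NormedAddCommGroup E] {μ : Measure α} [IsFiniteMeasure μ] {l : Filter ι} {g : ι → α → E}
    (hg : ∀ i, MemLp (g i) 2 μ) (h : Tendsto (fun i => ∫ a, ‖g i a‖ ^ 2 ∂μ) l (𝓝 0)) :
    Tendsto (fun i => ∫ a, ‖g i a‖ ∂μ) l (𝓝 0) := by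
  have hsqrt : Tendsto (fun i => √(μ.real univ) * √(∫ a, ‖g i a‖ ^ 2 ∂μ)) l (𝓝 0) := by
    simpa using ((Real.continuous_sqrt.tendsto 0).comp h).const_mul √(μ.real univ)
  exact squeeze_zero (fun i => integral_nonneg fun a => norm_nonneg _)
    (fun i => integral_norm_le_sqrt_measureReal_univ_mul (hg i)) hsqrt

theorem exists_tendsto_zero_div_tendsto_zero {b : ℕ → ℝ} (hb_nonneg : ∀ k, 0 ≤ b k)
    (hb : Tendsto b atTop (𝓝 0)) {ρ : ℝ} (hρ : 0 < ρ) :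
    ∃ η : ℕ → ℝ, (∀ k, η k ∈ Ioc 0 ρ) ∧ Tendsto η atTop (𝓝 0) ∧
      Tendsto (fun k => b k / η k) atTop (𝓝 0) := by
  have hsqrt : Tendsto (fun k => √(b k)) atTop (𝓝 0) := by
    simpa using hb.sqrt
  have hε : Tendsto (fun k : ℕ => 1 / ((k : ℝ) + 1)) atTop (𝓝 0) :=
    tendsto_one_div_add_atTop_nhds_zero_nat
  -- `η_k := min ρ (√b_k + 1/(k+1))`; the `1/(k+1)` keeps `η_k` positive where `b_k = 0`.
  have hη_pos (k : ℕ) : 0 < min ρ (√(b k) + 1 / ((k : ℝ) + 1)) := by positivity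
  refine ⟨fun k => min ρ (√(b k) + 1 / ((k : ℝ) + 1)), fun k => ⟨hη_pos k, min_le_left _ _⟩,
    ?_, ?_⟩
  · simpa [hρ.le] using (tendsto_const_nhds (x := ρ)).min (hsqrt.add hε)
  · refine squeeze_zero (fun k => div_nonneg (hb_nonneg k) (hη_pos k).le)
      (g := fun k => b k / ρ + √(b k)) (fun k => ?_) (by simpa using (hb.div_const ρ).add hsqrt)
    have hsq : b k / (√(b k) + 1 / ((k : ℝ) + 1)) ≤ √(b k) := by
      rw [div_le_iff₀ (by positivity)]
      nlinarith [Real.mul_self_sqrt (hb_nonneg k), Real.sqrt_nonneg (b k),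
        (by positivity : (0 : ℝ) < 1 / ((k : ℝ) + 1))]
    dsimp only
    rcases min_choice ρ (√(b k) + 1 / ((k : ℝ) + 1)) with h | h <;> rw [h]
    · linarith [Real.sqrt_nonneg (b k)]
    · linarith [div_nonneg (hb_nonneg k) hρ.le]

theorem integral_norm_sub_le_add {α E : Type*} [MeasurableSpace α] [NormedAddCommGroup E]
    {μ : Measure α} {f g : α → E} (v : E) (hfg : Integrable (fun a => f a - g a) μ)
    (hg : Integrable (fun a => g a - v) μ) :
    ∫ a, ‖f a - v‖ ∂μ ≤ ∫ a, ‖f a - g a‖ ∂μ + ∫ a, ‖g a - v‖ ∂μ := by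
  rw [← integral_add hfg.norm hg.norm]
  exact integral_mono_of_nonneg (ae_of_all _ fun a => norm_nonneg _) (hfg.norm.add hg.norm)
    (ae_of_all _ fun a => norm_sub_le_norm_sub_add_norm_sub _ _ _)

theorem exists_continuousAt_norm_sub_le_average {E : Type*} [NormedAddCommGroup E] {f : ℝ → E}
    (hf_cont : volume {t | ¬ ContinuousAt f t} = 0) {a b : ℝ} (hab : a < b)
    (hf : IntegrableOn f (Ioo a b)) (v : E) :
    ∃ s ∈ Ioo a b, ContinuousAt f s ∧ ‖f s - v‖ ≤ (b - a)⁻¹ * ∫ t in Ioo a b, ‖f t - v‖ := by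
  have hvol : volume (Ioo a b) ≠ 0 := by simpa using hab
  have hint : IntegrableOn (fun t => ‖f t - v‖) (Ioo a b) :=
    (hf.sub (integrableOn_const measure_Ioo_lt_top.ne)).norm
  have hnull : volume.restrict (Ioo a b) ({t | ¬ ContinuousAt f t} ∪ (Ioo a b)ᶜ) = 0 :=
    measure_union_null (nonpos_iff_eq_zero.1 ((Measure.restrict_apply_le _ _).trans_eq hf_cont))
      (by rw [Measure.restrict_apply' measurableSet_Ioo]; simp)
  obtain ⟨s, hs, hle⟩ := exists_notMem_null_le_average (by simpa using hvol) hint hnull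
  simp only [mem_union, mem_ofPred_eq, mem_compl_iff, not_or, not_not] at hs
  refine ⟨s, hs.2, hs.1, hle.trans_eq ?_⟩
  rw [setAverage_eq, Real.volume_real_Ioo_of_le hab.le, smul_eq_mul]

theorem exists_continuousAt_mem_Ioo_norm_sub_le {E : Type*} [NormedAddCommGroup E]
    {f g : ℝ → E} {S : Set ℝ} {r η : ℝ} (hη : 0 < η) (hS : Ioo (r - η) r ⊆ S)
    (hf : IntegrableOn f S) (hg : IntegrableOn g S)
    (hf_cont : volume {t | ¬ ContinuousAt f t} = 0) :
    ∃ s ∈ Ioo (r - η) r, ContinuousAt f s ∧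
      ‖f s - g r‖ ≤ (∫ t in S, ‖f t - g t‖) / η + η⁻¹ * ∫ t in Ioo (r - η) r, ‖g t - g r‖ := by
  obtain ⟨s, hs, hs_cont, hle⟩ :=
    exists_continuousAt_norm_sub_le_average hf_cont (sub_lt_self r hη) (hf.mono_set hS) (g r)
  refine ⟨s, hs, hs_cont, ?_⟩
  have hfg : IntegrableOn (fun t => f t - g t) S := hf.sub hg
  have hgr : IntegrableOn (fun t => g t - g r) (Ioo (r - η) r) :=
    (hg.mono_set hS).sub (integrableOn_const measure_Ioo_lt_top.ne)
  calc ‖f s - g r‖ ≤ η⁻¹ * ∫ t in Ioo (r - η) r, ‖f t - g r‖ := by simpa using hle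
    _ ≤ η⁻¹ * ((∫ t in Ioo (r - η) r, ‖f t - g t‖) + ∫ t in Ioo (r - η) r, ‖g t - g r‖) := by
        gcongr
        exact integral_norm_sub_le_add _ (hfg.mono_set hS) hgr
    _ ≤ η⁻¹ * ((∫ t in S, ‖f t - g t‖) + ∫ t in Ioo (r - η) r, ‖g t - g r‖) := by
        gcongr
        exacts [ae_of_all _ fun _ => norm_nonneg _, hfg.norm]
    _ = (∫ t in S, ‖f t - g t‖) / η + η⁻¹ * ∫ t in Ioo (r - η) r, ‖g t - g r‖ := by ring

theorem stmt_4_general (m : ℕ) (T : ℝ) (u : ℝ → EuclideanSpace ℝ (Fin m))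
    (uk : ℕ → ℝ → EuclideanSpace ℝ (Fin m)) (r : ℝ) (hr : r ∈ Ioo 0 T)
    (hu2 : MemLp u 2 (volume.restrict (Icc (0:ℝ) T)))
    (huk2 : ∀ k, MemLp (uk k) 2 (volume.restrict (Icc (0:ℝ) T)))
    (hleb : IsLebesguePoint u r)
    (hconv : Tendsto (fun k => ∫ s in Icc (0:ℝ) T, ‖uk k s - u s‖ ^ 2) atTop (𝓝 0))
    (hdisc : ∀ k, volume {t : ℝ | ¬ ContinuousAt (uk k) t} = 0) :
    ∃ rk : ℕ → ℝ, (∀ k, rk k ∈ Ioo 0 r) ∧ (∀ k, IsLebesguePoint (uk k) (rk k)) ∧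
      Tendsto rk atTop (𝓝 r) ∧ Tendsto (fun k => uk k (rk k)) atTop (𝓝 (u r)) := by
  have hL1 : Tendsto (fun k => ∫ s in Icc 0 T, ‖uk k s - u s‖) atTop (𝓝 0) :=
    tendsto_integral_norm_of_tendsto_integral_norm_sq (fun k => (huk2 k).sub hu2) hconv
  obtain ⟨η, hη, hη0, hL1η⟩ :=
    exists_tendsto_zero_div_tendsto_zero (fun k => integral_nonneg fun _ => norm_nonneg _) hL1 hr.1
  have hsub (k : ℕ) : Ioo (r - η k) r ⊆ Icc 0 T :=
    fun s hs => ⟨by linarith [(hη k).2, hs.1], hs.2.le.trans hr.2.le⟩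
  choose rk hrk hcont hle using fun k => exists_continuousAt_mem_Ioo_norm_sub_le (hη k).1 (hsub k)
    ((huk2 k).integrable one_le_two) (hu2.integrable one_le_two) (hdisc k)
  have hη_tendsto : Tendsto η atTop (𝓝[>] 0) :=
    tendsto_nhdsWithin_iff.mpr ⟨hη0, Eventually.of_forall fun k => (hη k).1⟩
  refine ⟨rk, fun k => ⟨by linarith [(hη k).2, (hrk k).1], (hrk k).2⟩,
    fun k => (hcont k).isLebesguePoint, ?_, ?_⟩
  · exact tendsto_of_tendsto_of_tendsto_of_le_of_le (by simpa using tendsto_const_nhds.sub hη0)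
      tendsto_const_nhds (fun k => (hrk k).1.le) (fun k => (hrk k).2.le)
  · rw [tendsto_iff_norm_sub_tendsto_zero]
    exact squeeze_zero (fun k => norm_nonneg _) hle
      (by simpa using hL1η.add (hleb.tendsto_left_average.comp hη_tendsto))

/-- If `u_k → u` strongly in `L²([0,T];ℝ^m)`, `r ∈ (0,T)` is a Lebesgue point of `u`,
each `u_k` has a negligible set of discontinuities and is continuous at `r`, then there are
Lebesgue points `r_k ∈ (0,r)` of `u_k` with `r_k → r` and `u_k(r_k) → u(r)`. -/
theorem stmt_4 (m : ℕ) (T : ℝ) (u : ℝ → EuclideanSpace ℝ (Fin m))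
    (uk : ℕ → ℝ → EuclideanSpace ℝ (Fin m)) (r : ℝ) (hr : r ∈ Ioo 0 T)
    (hu2 : MemLp u 2 (volume.restrict (Icc (0:ℝ) T)))
    (huk2 : ∀ k, MemLp (uk k) 2 (volume.restrict (Icc (0:ℝ) T)))
    (hleb : IsLebesguePoint u r)
    (hconv : Tendsto (fun k => ∫ s in Icc (0:ℝ) T, ‖uk k s - u s‖ ^ 2) atTop (𝓝 0))
    (hdisc : ∀ k, volume {t : ℝ | ¬ ContinuousAt (uk k) t} = 0)
    (hrcont : ∀ k, ContinuousAt (uk k) r) :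
    ∃ rk : ℕ → ℝ, (∀ k, rk k ∈ Ioo 0 r) ∧ (∀ k, IsLebesguePoint (uk k) (rk k)) ∧
      Tendsto rk atTop (𝓝 r) ∧ Tendsto (fun k => uk k (rk k)) atTop (𝓝 (u r)) :=
  stmt_4_general m T u uk r hr hu2 huk2 hleb hconv hdisc
end

section
/- Let $(X_k)_{k\in\mathbb{N}}$ and $X$ be random vectors in $\mathbb{R}^n$ on a probability space, let $g : \mathbb{R}^n \to \mathbb{R}^q$ be $C^1$ with $g$ and $\frac{\partial g}{\partial x}$ globally bounded and $g$ globally Lipschitz, and let $(Y_k)_{k\in\mathbb{N}}$ be random vectors in $\mathbb{R}^n$. Suppose $\mathbb{E}[\|X_k - X\|^2] \to 0$, $\mathbb{E}[\|Y_k - X\|^2] \to 0$, and for every $k$, $\mathbb{E}\big[g(X_k) + \frac{\partial g}{\partial x}(X_k)(Y_{k+1} - X_k)\big] = 0$. Then $\mathbb{E}[g(X)] = 0$. -/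
/-!
Subtracting the linearized constraint at step `k` gives
`E[g(X)] = E[g(X) - g(X_k) - g'(X_k)(Y_{k+1} - X_k)]`, and the integrand is bounded by
`(L + C)‖X_k - X‖ + C‖Y_{k+1} - X‖`, by the Lipschitz bound on `g` and the bound `C` on `g'`.
On a probability space `E‖·‖ ≤ E[‖·‖²]^{1/2}`, so both expectations on the right tend to zero.
-/

open Filter Topology MeasureTheory
open scoped NNReal

section
variable {Ω : Type*} [MeasurableSpace Ω] {P : Measure Ω}
  {E : Type*} [NormedAddCommGroup E]

theorem sq_integral_norm_le_integral_norm_sq [IsProbabilityMeasure P] {f : Ω → E}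
    (hf : MemLp f 2 P) : (∫ ω, ‖f ω‖ ∂P) ^ 2 ≤ ∫ ω, ‖f ω‖ ^ 2 ∂P := by
  have := ProbabilityTheory.variance_eq_sub hf.norm ▸ ProbabilityTheory.variance_nonneg _ P
  simpa [sub_nonneg] using this

theorem tendsto_integral_norm_of_tendsto_integral_norm_sq_s16 [IsProbabilityMeasure P]
    {ι : Type*} {l : Filter ι} {f : ι → Ω → E} (hf : ∀ k, MemLp (f k) 2 P)
    (h : Tendsto (fun k => ∫ ω, ‖f k ω‖ ^ 2 ∂P) l (𝓝 0)) :
    Tendsto (fun k => ∫ ω, ‖f k ω‖ ∂P) l (𝓝 0) := by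
  refine squeeze_zero (fun k => integral_nonneg fun ω => norm_nonneg _)
    (fun k => Real.le_sqrt_of_sq_le (sq_integral_norm_le_integral_norm_sq (hf k))) ?_
  simpa using h.sqrt

theorem LipschitzWith.integrable_comp [IsFiniteMeasure P] {F : Type*} [NormedAddCommGroup F]
    {g : E → F} {K : ℝ≥0} (hg : LipschitzWith K g) {f : Ω → E} (hf : Integrable f P) :
    Integrable (fun ω => g (f ω)) P := by
  refine ((integrable_const ‖g 0‖).add (hf.norm.const_mul K)).mono'
    (hg.continuous.comp_aestronglyMeasurable hf.1) (Eventually.of_forall fun ω => ?_)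
  calc ‖g (f ω)‖ ≤ ‖g 0‖ + ‖g (f ω) - g 0‖ := norm_le_norm_add_norm_sub' _ _
    _ ≤ ‖g 0‖ + K * ‖f ω‖ := by gcongr; simpa using hg.norm_sub_le (f ω) 0

end

section
variable {E F : Type*} [NormedAddCommGroup E] [NormedSpace ℝ E]
  [NormedAddCommGroup F] [NormedSpace ℝ F]

theorem LipschitzWith.norm_sub_linearization_le {g : E → F} {K : ℝ≥0} (hg : LipschitzWith K g)
    {A : E →L[ℝ] F} {C : ℝ} (hA : ‖A‖ ≤ C) (x y z : E) :
    ‖g z - (g x + A (y - x))‖ ≤ (K + C) * ‖x - z‖ + C * ‖y - z‖ := by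
  have hC : 0 ≤ C := (norm_nonneg A).trans hA
  have hyx : ‖y - x‖ ≤ ‖y - z‖ + ‖x - z‖ := by
    simpa only [norm_sub_rev z x] using norm_sub_le_norm_sub_add_norm_sub y z x
  calc ‖g z - (g x + A (y - x))‖ ≤ ‖g z - g x‖ + ‖A (y - x)‖ := by
        rw [sub_add_eq_sub_sub]; exact _root_.norm_sub_le _ _
    _ ≤ K * ‖x - z‖ + C * (‖y - z‖ + ‖x - z‖) := by
        gcongr
        · rw [norm_sub_rev]; exact hg.norm_sub_le x z
        · exact (A.le_opNorm _).trans (mul_le_mul hA hyx (norm_nonneg _) hC)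
    _ = (K + C) * ‖x - z‖ + C * ‖y - z‖ := by ring
end

section
variable {Ω : Type*} [MeasurableSpace Ω] {P : Measure Ω}
  {E F : Type*} [NormedAddCommGroup E] [NormedSpace ℝ E] [FiniteDimensional ℝ E]
  [MeasurableSpace E] [BorelSpace E]
  [NormedAddCommGroup F] [NormedSpace ℝ F] [FiniteDimensional ℝ F]
  {g : E → F} {C : ℝ}

theorem integrable_fderiv_comp_apply (hdg : ∀ x, ‖fderiv ℝ g x‖ ≤ C) {x v : Ω → E}
    (hx : AEMeasurable x P) (hv : Integrable v P) :
    Integrable (fun ω => fderiv ℝ g (x ω) (v ω)) P := by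
  have hA : AEStronglyMeasurable (fun ω => fderiv ℝ g (x ω)) P :=
    ((measurable_fderiv ℝ g).comp_aemeasurable hx).aestronglyMeasurable
  refine (hv.norm.const_mul C).mono'
    (isBoundedBilinearMap_apply.continuous.comp_aestronglyMeasurable (hA.prodMk hv.1))
    (Eventually.of_forall fun ω => ?_)
  exact ((fderiv ℝ g (x ω)).le_opNorm _).trans (by gcongr; exact hdg _)

theorem norm_integral_comp_le_of_integral_linearization_eq_zero [IsFiniteMeasure P]
    {K : ℝ≥0} (hg : LipschitzWith K g) (hdg : ∀ x, ‖fderiv ℝ g x‖ ≤ C) {x y z : Ω → E}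
    (hx : Integrable x P) (hy : Integrable y P) (hz : Integrable z P)
    (h0 : ∫ ω, (g (x ω) + fderiv ℝ g (x ω) (y ω - x ω)) ∂P = 0) :
    ‖∫ ω, g (z ω) ∂P‖ ≤ (K + C) * ∫ ω, ‖x ω - z ω‖ ∂P + C * ∫ ω, ‖y ω - z ω‖ ∂P := by
  have hgz := hg.integrable_comp hz
  have hlin : Integrable (fun ω => g (x ω) + fderiv ℝ g (x ω) (y ω - x ω)) P :=
    (hg.integrable_comp hx).add (integrable_fderiv_comp_apply hdg hx.aemeasurable (hy.sub hx))
  have hxz : Integrable (fun ω => ‖x ω - z ω‖) P := (hx.sub hz).norm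
  have hyz : Integrable (fun ω => ‖y ω - z ω‖) P := (hy.sub hz).norm
  calc ‖∫ ω, g (z ω) ∂P‖
      = ‖∫ ω, (g (z ω) - (g (x ω) + fderiv ℝ g (x ω) (y ω - x ω))) ∂P‖ := by
        rw [integral_sub hgz hlin, h0, sub_zero]
    _ ≤ ∫ ω, ‖g (z ω) - (g (x ω) + fderiv ℝ g (x ω) (y ω - x ω))‖ ∂P :=
        norm_integral_le_integral_norm _
    _ ≤ ∫ ω, ((K + C) * ‖x ω - z ω‖ + C * ‖y ω - z ω‖) ∂P :=
        integral_mono (hgz.sub hlin).norm ((hxz.const_mul _).add (hyz.const_mul _))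
          fun ω => hg.norm_sub_linearization_le (hdg _) _ _ _
    _ = (K + C) * ∫ ω, ‖x ω - z ω‖ ∂P + C * ∫ ω, ‖y ω - z ω‖ ∂P := by
        rw [integral_add (hxz.const_mul _) (hyz.const_mul _), integral_const_mul,
          integral_const_mul]

end

theorem stmt_16_general {Ω : Type*} [MeasurableSpace Ω] (P : Measure Ω) [IsProbabilityMeasure P]
    (n q : ℕ) (g : EuclideanSpace ℝ (Fin n) → EuclideanSpace ℝ (Fin q))
    (Cg : ℝ)
    (hdgb : ∀ x, ‖fderiv ℝ g x‖ ≤ Cg)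
    (L : NNReal) (hgl : LipschitzWith L g)
    (X : ℕ → Ω → EuclideanSpace ℝ (Fin n)) (Xlim : Ω → EuclideanSpace ℝ (Fin n))
    (Y : ℕ → Ω → EuclideanSpace ℝ (Fin n))
    (hX2 : ∀ k, MemLp (X k) 2 P) (hXl2 : MemLp Xlim 2 P) (hY2 : ∀ k, MemLp (Y k) 2 P)
    (hXconv : Tendsto (fun k => ∫ ω, ‖X k ω - Xlim ω‖ ^ 2 ∂P) atTop (𝓝 0))
    (hYconv : Tendsto (fun k => ∫ ω, ‖Y k ω - Xlim ω‖ ^ 2 ∂P) atTop (𝓝 0))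
    (hlin : ∀ k, ∫ ω, (g (X k ω) + fderiv ℝ g (X k ω) (Y (k + 1) ω - X k ω)) ∂P = 0) :
    ∫ ω, g (Xlim ω) ∂P = 0 := by
  have hX1 : Tendsto (fun k => ∫ ω, ‖X k ω - Xlim ω‖ ∂P) atTop (𝓝 0) :=
    tendsto_integral_norm_of_tendsto_integral_norm_sq_s16 (fun k => (hX2 k).sub hXl2) hXconv
  have hY1 : Tendsto (fun k => ∫ ω, ‖Y (k + 1) ω - Xlim ω‖ ∂P) atTop (𝓝 0) :=
    (tendsto_integral_norm_of_tendsto_integral_norm_sq_s16 (fun k => (hY2 k).sub hXl2)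
      hYconv).comp (tendsto_add_atTop_nat 1)
  have hbound : ∀ k, ‖∫ ω, g (Xlim ω) ∂P‖ ≤
      (L + Cg) * ∫ ω, ‖X k ω - Xlim ω‖ ∂P + Cg * ∫ ω, ‖Y (k + 1) ω - Xlim ω‖ ∂P := fun k =>
    norm_integral_comp_le_of_integral_linearization_eq_zero hgl hdgb
      ((hX2 k).integrable one_le_two) ((hY2 (k + 1)).integrable one_le_two)
      (hXl2.integrable one_le_two) (hlin k)
  have hbound_lim : Tendsto (fun k => (L + Cg) * ∫ ω, ‖X k ω - Xlim ω‖ ∂P +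
      Cg * ∫ ω, ‖Y (k + 1) ω - Xlim ω‖ ∂P) atTop (𝓝 0) := by
    simpa using (hX1.const_mul _).add (hY1.const_mul Cg)
  exact norm_le_zero_iff.mp (ge_of_tendsto' hbound_lim hbound)

/-- Passing the linearized expected terminal constraint to the limit: if
`E[g(X_k) + ∂g/∂x(X_k)(Y_{k+1} - X_k)] = 0` for all `k`, `E[‖X_k - X‖²] → 0` and
`E[‖Y_k - X‖²] → 0`, with `g` of class `C¹`, bounded with bounded derivative and
globally Lipschitz, then `E[g(X)] = 0`. -/
theorem stmt_16 {Ω : Type*} [MeasurableSpace Ω] (P : Measure Ω) [IsProbabilityMeasure P]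
    (n q : ℕ) (g : EuclideanSpace ℝ (Fin n) → EuclideanSpace ℝ (Fin q))
    (hg : ContDiff ℝ 1 g) (Cg : ℝ)
    (hgb : ∀ x, ‖g x‖ ≤ Cg) (hdgb : ∀ x, ‖fderiv ℝ g x‖ ≤ Cg)
    (L : NNReal) (hgl : LipschitzWith L g)
    (X : ℕ → Ω → EuclideanSpace ℝ (Fin n)) (Xlim : Ω → EuclideanSpace ℝ (Fin n))
    (Y : ℕ → Ω → EuclideanSpace ℝ (Fin n))
    (hX2 : ∀ k, MemLp (X k) 2 P) (hXl2 : MemLp Xlim 2 P) (hY2 : ∀ k, MemLp (Y k) 2 P)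
    (hXconv : Tendsto (fun k => ∫ ω, ‖X k ω - Xlim ω‖ ^ 2 ∂P) atTop (𝓝 0))
    (hYconv : Tendsto (fun k => ∫ ω, ‖Y k ω - Xlim ω‖ ^ 2 ∂P) atTop (𝓝 0))
    (hlin : ∀ k, ∫ ω, (g (X k ω) + fderiv ℝ g (X k ω) (Y (k + 1) ω - X k ω)) ∂P = 0) :
    ∫ ω, g (Xlim ω) ∂P = 0 :=
  stmt_16_general P n q g Cg hdgb L hgl X Xlim Y hX2 hXl2 hY2 hXconv hYconv hlin
end
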